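/- arXiv:1506.02137 — 5 statements merged into one kernel-verified Lean document; each statement's English description precedes it below -/
import Mathlib

section
/- For every positive integer n, the Bernoulli number B_n satisfies B_n = \sum_{i=1}^{n} (-1)^i * (binom(n+1, i+1) / binom(n+i, i)) * S(n+i, i), where S denotes the Stirling numbers of the second kind. -/
/-!
Put `F = (eˣ - 1) / x`. Differentiating `(eˣ - 1)^(k+1)` reproduces the recurrence of the
Stirling numbers, so `m! [xᵐ] (eˣ - 1)^k = k! S(m,k)`, i.e. `n! [xⁿ] F^i = S(n+i,i) / C(n+i,i)`.
On the other hand `y ∑_{i ≤ n} (-1)^i C(n+1,i+1) y^i = 1 - (1 - y)^(n+1)`, and `1 - F` is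
divisible by `x`; hence `∑_{i ≤ n} (-1)^i C(n+1,i+1) F^i` agrees with `1 / F = x / (eˣ - 1)`
up to order `xⁿ`, whose `n`-th coefficient is `B_n / n!`. The `i = 0` term drops out as `n > 0`.
-/

/-- Stirling numbers of the second kind. -/
def stirling2 : ℕ → ℕ → ℕ
  | 0, 0 => 1
  | 0, _ + 1 => 0
  | _ + 1, 0 => 0
  | n + 1, k + 1 => (k + 1) * stirling2 n (k + 1) + stirling2 n k

open PowerSeries Finset Nat

theorem mul_sum_neg_one_pow_mul_choose_succ_mul_pow {R : Type*} [CommRing R] (y : R) (n : ℕ) :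
    y * ∑ i ∈ range (n + 1), (-1) ^ i * ((n + 1).choose (i + 1) : R) * y ^ i =
      1 - (1 - y) ^ (n + 1) := by
  have h := add_pow (-y) 1 (n + 1)
  rw [sum_range_succ'] at h
  rw [show (1 : R) - y = -y + 1 by ring, h, mul_sum]
  simp only [pow_zero, one_pow, mul_one, choose_zero_right, cast_one]
  rw [sub_add_cancel_right, ← sum_neg_distrib]
  refine sum_congr rfl fun i _ => ?_
  ring

theorem coeff_eq_sum_choose_mul_coeff_pow {R : Type*} [CommRing R] {f g : R⟦X⟧}
    (hgf : g * f = 1) (hf : constantCoeff f = 1) (n : ℕ) :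
    coeff n g =
      ∑ i ∈ range (n + 1), (-1) ^ i * ((n + 1).choose (i + 1) : R) * coeff n (f ^ i) := by
  set P := ∑ i ∈ range (n + 1), (-1) ^ i * ((n + 1).choose (i + 1) : R⟦X⟧) * f ^ i
  have hX : X ^ (n + 1) ∣ (1 - f) ^ (n + 1) :=
    pow_dvd_pow_of_dvd (X_dvd_iff.mpr (by rw [map_sub, map_one, hf, sub_self])) _
  have hgP : g - P = g * (1 - f) ^ (n + 1) := by
    calc g - P = g - g * f * P := by rw [hgf, one_mul]
      _ = g * (1 - f * P) := by ring
      _ = g * (1 - f) ^ (n + 1) := by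
        rw [mul_sum_neg_one_pow_mul_choose_succ_mul_pow, sub_sub_cancel]
  have hcoeff : coeff n (g - P) = 0 :=
    hgP ▸ X_pow_dvd_iff.mp (hX.mul_left g) n (lt_add_one n)
  rw [map_sub, sub_eq_zero, map_sum] at hcoeff
  rw [hcoeff]
  refine sum_congr rfl fun i _ => ?_
  rw [← map_natCast (C (R := R)), ← map_one C, ← map_neg C, ← map_pow, ← map_mul, coeff_C_mul]

theorem derivative_exp_sub_one_pow_succ (k : ℕ) :
    d⁄dX ℚ ((exp ℚ - 1) ^ (k + 1)) =
      (k + 1 : ℚ) • ((exp ℚ - 1) ^ (k + 1) + (exp ℚ - 1) ^ k) := by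
  rw [derivative_pow, map_sub, derivative_exp, derivative_one, smul_eq_C_mul]
  simp only [map_add, map_natCast, map_one, cast_add, cast_one, add_tsub_cancel_right]
  ring

theorem factorial_mul_coeff_exp_sub_one_pow (m k : ℕ) :
    (m ! : ℚ) * coeff m ((exp ℚ - 1) ^ k) = k ! * stirling2 m k := by
  induction m generalizing k with
  | zero =>
    cases k <;> simp [stirling2]
  | succ m ih =>
    cases k with
    | zero => simp [stirling2, coeff_one]
    | succ k =>
      have h := congrArg (coeff m) (derivative_exp_sub_one_pow_succ k)
      rw [coeff_derivative, coeff_smul, map_add, smul_eq_mul] at h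
      have ih' := ih (k + 1)
      push_cast [factorial_succ, stirling2] at ih' ⊢
      linear_combination (m ! : ℚ) * h + (k + 1 : ℚ) * (ih' + ih k)

noncomputable def expSubOneDivX : ℚ⟦X⟧ :=
  mk fun n => ((n + 1)! : ℚ)⁻¹

theorem X_mul_expSubOneDivX : X * expSubOneDivX = exp ℚ - 1 := by
  ext n
  cases n <;> simp [expSubOneDivX, coeff_succ_X_mul, coeff_one]

theorem constantCoeff_expSubOneDivX : constantCoeff expSubOneDivX = 1 := by
  simp [expSubOneDivX, ← coeff_zero_eq_constantCoeff_apply]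

theorem bernoulliPowerSeries_mul_expSubOneDivX :
    bernoulliPowerSeries ℚ * expSubOneDivX = 1 := by
  apply mul_left_cancel₀ (X_ne_zero (R := ℚ))
  rw [mul_left_comm, X_mul_expSubOneDivX, bernoulliPowerSeries_mul_exp_sub_one, mul_one]

theorem stirling2_add_div_choose (n i : ℕ) :
    (stirling2 (n + i) i : ℚ) / (n + i).choose i = n ! * coeff n (expSubOneDivX ^ i) := by
  have hcoeff : coeff n (expSubOneDivX ^ i) = coeff (n + i) ((exp ℚ - 1) ^ i) := by
    rw [← X_mul_expSubOneDivX, mul_pow, coeff_X_pow_mul]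
  have hfac : ((n + i).choose i * n ! * i ! : ℚ) = (n + i)! := by
    exact_mod_cast add_choose_mul_factorial_mul_factorial n i
  rw [div_eq_iff (by exact_mod_cast (choose_pos (le_add_left i n)).ne'), hcoeff]
  apply mul_right_cancel₀ (by positivity : (i ! : ℚ) ≠ 0)
  linear_combination
    -coeff (n + i) ((exp ℚ - 1) ^ i) * hfac - factorial_mul_coeff_exp_sub_one_pow (n + i) i

theorem bernoulli_eq_sum_stirling (n : ℕ) (hn : 0 < n) :
    bernoulli n =
      ∑ i ∈ Finset.Icc 1 n,
        (-1 : ℚ) ^ i * (((n + 1).choose (i + 1) : ℚ) / ((n + i).choose i : ℚ)) *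
          (stirling2 (n + i) i : ℚ) := by
  calc bernoulli n = n ! * coeff n (bernoulliPowerSeries ℚ) := by
        simp [bernoulliPowerSeries, mul_div_cancel₀ _ (by positivity : (n ! : ℚ) ≠ 0)]
    _ = n ! * ∑ i ∈ Icc 1 n,
          (-1) ^ i * ((n + 1).choose (i + 1) : ℚ) * coeff n (expSubOneDivX ^ i) := by
        rw [coeff_eq_sum_choose_mul_coeff_pow bernoulliPowerSeries_mul_expSubOneDivX
          constantCoeff_expSubOneDivX, range_eq_Ico, sum_eq_sum_Ico_succ_bot (by omega),
          zero_add, Ico_add_one_right_eq_Icc, pow_zero, pow_zero, coeff_one, if_neg hn.ne',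
          mul_zero, zero_add]
    _ = _ := by
        rw [mul_sum]
        refine sum_congr rfl fun i _ => ?_
        rw [mul_assoc _ (_ / _), mul_comm_div, stirling2_add_div_choose]
        ring
end

section
/- For every positive integer k and every real (or complex) number u, the Bernoulli polynomial B_k(u) equals (-1)^k times the determinant of the k×k matrix whose entry in row \ell (1 \le \ell \le k) and column m (0 \le m \le k-1) is (1/(\ell+1)) * binom(\ell+1, m) * [(1-u)^{\ell-m+1} - (-u)^{\ell-m+1}], with the convention binom(p,q) = 0 for q > p. -/
/-!
Multiplying the generating function `z e^{uz} / (e^z - 1)` of the `B_j(u)` by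
`e^{(1-u)z} - e^{-uz} = e^{-uz} (e^z - 1)` leaves `z`, so comparing coefficients of `z^n / n!`
for `n ≥ 2` gives `∑ j, C(n, j) B_j(u) ((1-u)^{n-j} - (-u)^{n-j}) = 0`. Hence the matrix of the
theorem sends `(B_0(u), …, B_{k-1}(u))` to `(0, …, 0, -B_k(u))`. Since `B_0(u) = 1`, Cramer's
rule replaces the first column by this vector without changing the determinant; Laplace
expansion along it leaves a lower triangular minor with unit diagonal, because the matrix is lower
Hessenberg with superdiagonal entries `1`.
-/

open Finset PowerSeries
open scoped Nat

theorem choose_mul_pow_sub_pow_eq_zero {R : Type*} [CommRing R] (a b : R) {n j : ℕ}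
    (h : n ≤ j) :
    (n.choose j : R) * (a ^ (n - j) - b ^ (n - j)) = 0 := by
  rcases h.eq_or_lt with rfl | hlt
  · simp
  · simp [Nat.choose_eq_zero_of_lt hlt]

namespace PowerSeries

variable {A : Type*} [CommRing A] [Algebra ℚ A]

noncomputable def egf (f : ℕ → A) : A⟦X⟧ := mk fun n => (1 / n ! : ℚ) • f n

theorem rescale_exp_sub_rescale_exp (a b : A) :
    rescale a (exp A) - rescale b (exp A) = egf fun n => a ^ n - b ^ n := by
  ext n
  simp [egf, coeff_rescale, coeff_exp, Algebra.smul_def, mul_comm, sub_mul]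

theorem factorial_smul_coeff_egf_mul_egf (f g : ℕ → A) (n : ℕ) :
    (n ! : ℚ) • coeff n (egf f * egf g) =
      ∑ j ∈ range (n + 1), (n.choose j : A) * f j * g (n - j) := by
  rw [coeff_mul, Nat.sum_antidiagonal_eq_sum_range_succ_mk, smul_sum]
  refine sum_congr rfl fun j hj => ?_
  have hchoose : (n ! * (1 / j ! * (1 / (n - j)!)) : ℚ) = n.choose j := by
    rw [Nat.cast_choose ℚ (mem_range_succ_iff.mp hj)]
    field_simp
  simp only [egf, coeff_mk, smul_mul_smul_comm, smul_smul, hchoose, Nat.cast_smul_eq_nsmul,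
    nsmul_eq_mul, mul_assoc]

end PowerSeries

namespace Polynomial

variable {A : Type*} [CommRing A] [Algebra ℚ A]

theorem egf_bernoulli_mul_rescale_exp_sub (t : A) :
    egf (fun n => aeval t (bernoulli n)) * (rescale (1 - t) (exp A) - rescale (-t) (exp A)) =
      PowerSeries.X := by
  have hegf : egf (fun n => aeval t (bernoulli n)) =
      mk fun n => aeval t ((1 / n ! : ℚ) • bernoulli n) := by
    simp only [egf, map_smul]
  have hexp : rescale (1 - t) (exp A) - rescale (-t) (exp A) =
      rescale (-t) (exp A) * (exp A - 1) := by
    have h := exp_mul_exp_eq_exp_add (-t) (1 : A)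
    rw [rescale_one, RingHom.id_apply, neg_add_eq_sub] at h
    rw [mul_sub, mul_one, h]
  calc _ = ((mk fun n => aeval t ((1 / n ! : ℚ) • bernoulli n)) * (exp A - 1)) *
        rescale (-t) (exp A) := by rw [hegf, hexp]; ring
    _ = PowerSeries.X * (rescale t (exp A) * rescale (-t) (exp A)) := by
        rw [bernoulli_generating_function, mul_assoc]
    _ = PowerSeries.X := by simp [exp_mul_exp_eq_exp_add]

theorem sum_range_choose_mul_sub_pow_mul_bernoulli_eq_zero (t : A) {n m : ℕ} (hn : 2 ≤ n)
    (hm : n ≤ m) :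
    ∑ j ∈ range m, (n.choose j : A) * ((1 - t) ^ (n - j) - (-t) ^ (n - j)) *
      aeval t (bernoulli j) = 0 := by
  have hvanish (j : ℕ) (hj : n ≤ j) :
      (n.choose j : A) * ((1 - t) ^ (n - j) - (-t) ^ (n - j)) * aeval t (bernoulli j) = 0 := by
    rw [choose_mul_pow_sub_pow_eq_zero _ _ hj, zero_mul]
  have hrange (l : ℕ) (hl : n ≤ l) := sum_subset (range_subset_range.2 hl)
    fun j _ hj => hvanish j (by simpa using hj)
  have hcoeff := factorial_smul_coeff_egf_mul_egf (fun j => aeval t (bernoulli j))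
    (fun m => (1 - t) ^ m - (-t) ^ m) n
  rw [← rescale_exp_sub_rescale_exp, egf_bernoulli_mul_rescale_exp_sub, PowerSeries.coeff_X,
    if_neg (by omega), smul_zero] at hcoeff
  rw [← hrange m hm, hrange (n + 1) n.le_succ, hcoeff]
  exact sum_congr rfl fun j _ => by ring

theorem sum_range_choose_mul_sub_pow_mul_bernoulli_eq_neg (t : A) (n : ℕ) :
    ∑ j ∈ range (n + 1), ((n + 2).choose j : A) * ((1 - t) ^ (n + 2 - j) - (-t) ^ (n + 2 - j)) *
      aeval t (bernoulli j) = -((n + 2 : A) * aeval t (bernoulli (n + 1))) := by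
  have h := sum_range_choose_mul_sub_pow_mul_bernoulli_eq_zero t (n := n + 2) (m := n + 2)
    (by omega) le_rfl
  rw [sum_range_succ, show n + 2 - (n + 1) = 1 by omega, Nat.choose_succ_self_right] at h
  push_cast at h
  linear_combination h

end Polynomial

namespace Matrix

variable {R : Type*} [CommRing R] {n : ℕ}

theorem det_eq_of_mulVec_eq_single_last (A : Matrix (Fin (n + 1)) (Fin (n + 1)) R)
    (v : Fin (n + 1) → R) (hv : v 0 = 1) (c : R) (hA : A *ᵥ v = Pi.single (Fin.last n) c) :
    A.det = (-1) ^ n * c * (A.submatrix Fin.castSucc Fin.succ).det := by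
  have hcol : A.det = (A.updateCol 0 (A *ᵥ v)).det := by
    have : A *ᵥ v = fun k => ∑ i, v i • A k i := by
      ext k
      simp [mulVec, dotProduct, mul_comm]
    rw [this, det_updateCol_sum, hv, one_smul]
  have hminor : (A.updateCol 0 (Pi.single (Fin.last n) c)).submatrix (Fin.last n).succAbove
      Fin.succ = A.submatrix Fin.castSucc Fin.succ := by
    ext i j
    simp [Fin.succ_ne_zero]
  rw [hcol, hA, det_succ_column_zero, Fintype.sum_eq_single (Fin.last n)]
  · rw [hminor, updateCol_self, Pi.single_eq_same, Fin.val_last]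
  · intro i hi
    simp [hi]

theorem det_submatrix_castSucc_succ_eq_one (A : Matrix (Fin (n + 1)) (Fin (n + 1)) R)
    (hzero : ∀ i j : Fin (n + 1), (i : ℕ) + 1 < j → A i j = 0)
    (hone : ∀ i : Fin n, A i.castSucc i.succ = 1) :
    (A.submatrix Fin.castSucc Fin.succ).det = 1 := by
  rw [det_of_isLowerTriangular (A.submatrix Fin.castSucc Fin.succ)
    fun i j hij => hzero _ _ (by simpa using hij)]
  simp [hone]

end Matrix

open Polynomial Matrix

variable {K : Type*} [Field K]

noncomputable def bernoulliHessenberg (k : ℕ) (u : K) : Matrix (Fin k) (Fin k) K :=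
  of fun i j : Fin k =>
    (1 / (((i : ℕ) + 1 : ℕ) + 1 : K)) * ((((i : ℕ) + 1) + 1).choose (j : ℕ) : K) *
      ((1 - u) ^ ((i : ℕ) + 2 - (j : ℕ)) - (-u) ^ ((i : ℕ) + 2 - (j : ℕ)))

theorem bernoulliHessenberg_eq_zero_of_lt {n : ℕ} (u : K) (i j : Fin n)
    (hij : (i : ℕ) + 1 < j) :
    bernoulliHessenberg n u i j = 0 := by
  simp only [bernoulliHessenberg, of_apply, mul_assoc]
  rw [choose_mul_pow_sub_pow_eq_zero _ _ (by omega), mul_zero]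

section

variable [CharZero K]

theorem bernoulliHessenberg_mulVec (n : ℕ) (u : K) :
    bernoulliHessenberg (n + 1) u *ᵥ (fun j => aeval u (bernoulli j)) =
      Pi.single (Fin.last n) (-aeval u (bernoulli (n + 1))) := by
  ext r
  have hrow : (bernoulliHessenberg (n + 1) u *ᵥ fun j => aeval u (bernoulli j)) r =
      1 / ((r : ℕ) + 2 : K) * ∑ j ∈ range (n + 1), (((r : ℕ) + 2).choose j : K) *
        ((1 - u) ^ ((r : ℕ) + 2 - j) - (-u) ^ ((r : ℕ) + 2 - j)) * aeval u (bernoulli j) := by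
    rw [mulVec, dotProduct, mul_sum, ← Fin.sum_univ_eq_sum_range (fun j =>
      1 / ((r : ℕ) + 2 : K) * ((((r : ℕ) + 2).choose j : K) *
        ((1 - u) ^ ((r : ℕ) + 2 - j) - (-u) ^ ((r : ℕ) + 2 - j)) * aeval u (bernoulli j)))
      (n + 1)]
    refine sum_congr rfl fun j _ => ?_
    simp only [bernoulliHessenberg, of_apply]
    push_cast
    ring
  rcases eq_or_ne r (Fin.last n) with rfl | hr
  · rw [hrow, Fin.val_last, sum_range_choose_mul_sub_pow_mul_bernoulli_eq_neg, Pi.single_eq_same]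
    have : (n + 2 : K) ≠ 0 := by exact_mod_cast (n + 1).succ_ne_zero
    field_simp
  · rw [hrow, sum_range_choose_mul_sub_pow_mul_bernoulli_eq_zero u (by omega)
      (by have := Fin.val_lt_last hr; omega), mul_zero, Pi.single_eq_of_ne hr]

theorem bernoulliHessenberg_castSucc_succ {n : ℕ} (u : K) (i : Fin n) :
    bernoulliHessenberg (n + 1) u i.castSucc i.succ = 1 := by
  have : ((i : ℕ) + 1 + 1 : K) ≠ 0 := by exact_mod_cast (i + 1 : ℕ).succ_ne_zero
  simp only [bernoulliHessenberg, of_apply, Fin.val_castSucc, Fin.val_succ,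
    show (i : ℕ) + 2 - (i + 1) = 1 by omega, Nat.choose_succ_self_right]
  push_cast
  rw [one_div_mul_cancel this]
  ring

theorem det_bernoulliHessenberg (k : ℕ) (u : K) :
    (bernoulliHessenberg k u).det = (-1) ^ k * aeval u (bernoulli k) := by
  cases k with
  | zero => simp
  | succ n =>
    rw [det_eq_of_mulVec_eq_single_last _ _ (by simp) _ (bernoulliHessenberg_mulVec n u),
      det_submatrix_castSucc_succ_eq_one _ (bernoulliHessenberg_eq_zero_of_lt u)
        (bernoulliHessenberg_castSucc_succ u)]
    ring

end

theorem bernoulliPolynomial_eq_det_general (k : ℕ) (u : ℝ) :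
    Polynomial.eval u ((Polynomial.bernoulli k).map (algebraMap ℚ ℝ)) =
      (-1 : ℝ) ^ k *
        Matrix.det (Matrix.of fun i j : Fin k =>
          (1 / (((i : ℕ) + 1 : ℕ) + 1 : ℝ)) * ((((i : ℕ) + 1) + 1).choose (j : ℕ) : ℝ) *
            ((1 - u) ^ ((i : ℕ) + 2 - (j : ℕ)) - (-u) ^ ((i : ℕ) + 2 - (j : ℕ)))) := by
  change _ = _ * (bernoulliHessenberg k u).det
  rw [det_bernoulliHessenberg, ← mul_assoc, ← pow_add, ← two_mul, pow_mul, neg_one_sq,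
    one_pow, one_mul, eval_map_algebraMap]

theorem bernoulliPolynomial_eq_det (k : ℕ) (hk : 0 < k) (u : ℝ) :
    Polynomial.eval u ((Polynomial.bernoulli k).map (algebraMap ℚ ℝ)) =
      (-1 : ℝ) ^ k *
        Matrix.det (Matrix.of fun i j : Fin k =>
          (1 / (((i : ℕ) + 1 : ℕ) + 1 : ℝ)) * ((((i : ℕ) + 1) + 1).choose (j : ℕ) : ℝ) *
            ((1 - u) ^ ((i : ℕ) + 2 - (j : ℕ)) - (-u) ^ ((i : ℕ) + 2 - (j : ℕ)))) :=
  bernoulliPolynomial_eq_det_general k u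
end

section
/- For every positive integer n and every real number u, the Bernoulli polynomial satisfies B_n(u) = \sum_{k=1}^n k! \sum_{r+s=k} \sum_{\ell+m=n} (-1)^m binom(n,\ell) * (\ell!/(\ell+r)!) * (m!/(m+s)!) * [\sum_{i=0}^r \sum_{j=0}^s (-1)^{i+j} binom(\ell+r, r-i) binom(m+s, s-j) S(\ell+i, i) S(m+j, j)] * u^{m+s} (1-u)^{\ell+r}. -/
open Nat

/-!
Since `e^{(1-u)z} - e^{-uz} = e^{-uz} (e^z - 1)`, the exponential generating function of the
`B_n(u)` is `z / (e^{(1-u)z} - e^{-uz}) = 1 / (1 + V)`, where `V(z) = (1-u) τ((1-u)z) + u τ(-uz)`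
and `τ(z) = (e^z - 1 - z) / z`. As `V(0) = 0`, `B_n(u) / n! = ∑_{k ≤ n} (-1)^k [z^n] V^k`.
Expanding `V^k` binomially, and each `τ^r = z^{-r} (e^z - 1 - z)^r` binomially again, reduces
everything to the coefficients of `(e^z - 1)^i = i! ∑_N S(N, i) z^N / N!`; these give the
bracketed Stirling sums. That expansion holds because differentiating gives
`((e^z - 1)^{k+1})' = (k+1) ((e^z - 1)^{k+1} + (e^z - 1)^k)`, the recurrence of `S`.
-/

open Finset PowerSeries

namespace PowerSeries

section CommSemiring

variable {R : Type*} [CommSemiring R]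

theorem coeff_add_pow (F G : R⟦X⟧) (n k : ℕ) :
    coeff n ((F + G) ^ k) = ∑ rs ∈ antidiagonal k, (k.choose rs.1 : R) *
      ∑ lm ∈ antidiagonal n, coeff lm.1 (F ^ rs.1) * coeff lm.2 (G ^ rs.2) := by
  rw [(Commute.all F G).add_pow', map_sum]
  simp_rw [map_nsmul, coeff_mul, nsmul_eq_mul]

theorem coeff_smul_rescale_pow (b a : R) (f : R⟦X⟧) (l r : ℕ) :
    coeff l ((b • rescale a f) ^ r) = b ^ r * a ^ l * coeff l (f ^ r) := by
  rw [smul_pow, ← map_pow, coeff_smul, coeff_rescale, smul_eq_mul, mul_assoc]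

end CommSemiring

section CommRing

variable {R : Type*} [CommRing R]

theorem coeff_eq_sum_neg_one_pow_mul_coeff_pow {f g : R⟦X⟧} (hg : constantCoeff g = 0)
    (h : f * (1 + g) = 1) (n : ℕ) :
    coeff n f = ∑ k ∈ range (n + 1), (-1) ^ k * coeff n (g ^ k) := by
  have hgeom : ∑ k ∈ range (n + 1), (-g) ^ k = f - f * (-g) ^ (n + 1) := by
    calc ∑ k ∈ range (n + 1), (-g) ^ k
          = f * ((1 - -g) * ∑ k ∈ range (n + 1), (-g) ^ k) := by
          rw [sub_neg_eq_add, ← mul_assoc, h, one_mul]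
      _ = f - f * (-g) ^ (n + 1) := by rw [mul_neg_geom_sum, mul_sub, mul_one]
  have htail : coeff n (f * (-g) ^ (n + 1)) = 0 := by
    have hX : X ^ (n + 1) ∣ f * (-g) ^ (n + 1) :=
      dvd_mul_of_dvd_right (pow_dvd_pow_of_dvd (X_dvd_iff.mpr (by rw [map_neg, hg, neg_zero])) _)
        f
    exact X_pow_dvd_iff.mp hX n (Nat.lt_succ_self n)
  have hneg (k : ℕ) : coeff n ((-g) ^ k) = (-1) ^ k * coeff n (g ^ k) := by
    rw [neg_pow, ← map_one C, ← map_neg, ← map_pow, coeff_C_mul]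
  simp_rw [← hneg, ← map_sum, hgeom, map_sub, htail, sub_zero]

theorem X_mul_smul_rescale (a : R) (f : R⟦X⟧) :
    X * (a • rescale a f) = rescale a (X * f) := by
  rw [map_mul, rescale_X, smul_eq_C_mul]; ring

end CommRing

variable {A : Type*} [CommRing A] [Algebra ℚ A]

theorem derivative_exp_sub_one_pow (k : ℕ) :
    d⁄dX A ((exp A - 1) ^ (k + 1)) =
      (k + 1 : A) • ((exp A - 1) ^ (k + 1) + (exp A - 1) ^ k) := by
  rw [Derivation.leibniz_pow, map_sub, derivative_exp, Derivation.map_one_eq_zero, sub_zero,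
    add_tsub_cancel_right, smul_eq_mul, nsmul_eq_mul, smul_eq_C_mul, map_add, map_one,
    map_natCast]
  push_cast
  ring

theorem factorial_mul_coeff_exp_sub_one_pow (N k : ℕ) :
    (N ! : A) * coeff N ((exp A - 1) ^ k) = k ! * stirling2 N k := by
  induction N generalizing k with
  | zero =>
    cases k <;> simp [stirling2, constantCoeff_exp]
  | succ N ih =>
    cases k with
    | zero => simp [stirling2, coeff_one]
    | succ k =>
      have h := congrArg (coeff N) (derivative_exp_sub_one_pow (A := A) k)
      rw [coeff_derivative, coeff_smul, map_add, smul_eq_mul] at h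
      calc ((N + 1)! : A) * coeff (N + 1) ((exp A - 1) ^ (k + 1))
          = N ! * (coeff (N + 1) ((exp A - 1) ^ (k + 1)) * (N + 1)) := by
            push_cast [factorial_succ]; ring
        _ = (k + 1) * (N ! * coeff N ((exp A - 1) ^ (k + 1)) +
              N ! * coeff N ((exp A - 1) ^ k)) := by
            rw [h]; ring
        _ = ((k + 1)! : A) * stirling2 (N + 1) (k + 1) := by
            rw [ih, ih, stirling2]; push_cast [factorial_succ]; ring

theorem factorial_mul_coeff_exp_sub_one_sub_X_pow (l r : ℕ) :
    ((l + r)! : A) * coeff (l + r) ((exp A - 1 - X) ^ r) =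
      (-1) ^ r * r ! * ∑ i ∈ range (r + 1),
        (-1) ^ i * ((l + r).choose (r - i) : A) * stirling2 (l + i) i := by
  rw [sub_pow, map_sum, mul_sum, mul_sum]
  refine sum_congr rfl fun i hi => ?_
  have hir : i ≤ r := Nat.lt_succ_iff.mp (mem_range.mp hi)
  have hterm : (-1 : A⟦X⟧) ^ (i + r) * (exp A - 1) ^ i * X ^ (r - i) * (r.choose i : A⟦X⟧) =
      C ((-1) ^ (i + r) * (r.choose i : A)) * (X ^ (r - i) * (exp A - 1) ^ i) := by
    simp only [map_mul, map_pow, map_neg, map_one, map_natCast]; ring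
  have hfac : ((l + r)! : A) = (l + r).choose (r - i) * (r - i)! * (l + i)! := by
    rw [← Nat.choose_mul_factorial_mul_factorial (by omega : r - i ≤ l + r),
      show l + r - (r - i) = l + i by omega]
    push_cast; ring
  have hchoose : (r.choose i * i ! * (r - i)! : A) = r ! := by
    simpa using congrArg (Nat.cast (R := A)) (Nat.choose_mul_factorial_mul_factorial hir)
  rw [hterm, coeff_C_mul, coeff_X_pow_mul', if_pos (by omega),
    show l + r - (r - i) = l + i by omega, hfac]
  linear_combination
    ((l + r).choose (r - i) * (r - i)! * (-1) ^ (i + r) * r.choose i : A) *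
        factorial_mul_coeff_exp_sub_one_pow (A := A) (l + i) i +
      ((l + r).choose (r - i) * (-1) ^ (i + r) * stirling2 (l + i) i : A) * hchoose

variable (A) in
/-- The series `τ(z) = (e^z - 1) / z - 1` above. -/
noncomputable def expTail : A⟦X⟧ := mk (fun p => coeff (p + 1) (exp A)) - 1

theorem X_mul_expTail : X * expTail A = exp A - 1 - X := by
  rw [expTail, mul_sub, mul_one, ← sub_const_eq_X_mul_shift, constantCoeff_exp, map_one]

theorem coeff_expTail_pow (l r : ℕ) :
    coeff l (expTail A ^ r) = coeff (l + r) ((exp A - 1 - X) ^ r) := by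
  rw [← X_mul_expTail, mul_pow, coeff_X_pow_mul]

theorem coeff_expTail_pow_eq_sum_stirling2 {K : Type*} [Field K] [Algebra ℚ K] (l r : ℕ) :
    coeff l (expTail K ^ r) = (-1) ^ r * r ! / (l + r)! *
      ∑ i ∈ range (r + 1), (-1) ^ i * ((l + r).choose (r - i) : K) * stirling2 (l + i) i := by
  have := algebraRat.charZero K
  rw [div_mul_eq_mul_div, eq_div_iff (Nat.cast_ne_zero.mpr (factorial_ne_zero _)), mul_comm,
    coeff_expTail_pow, factorial_mul_coeff_exp_sub_one_sub_X_pow]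

/-- The series `V` above. -/
noncomputable def expSubExpTail (u : A) : A⟦X⟧ :=
  (1 - u) • rescale (1 - u) (expTail A) + u • rescale (-u) (expTail A)

theorem constantCoeff_expSubExpTail (u : A) : constantCoeff (expSubExpTail u) = 0 := by
  rw [← coeff_zero_eq_constantCoeff_apply]
  simp [expSubExpTail, expTail, coeff_rescale, coeff_exp, -coeff_zero_eq_constantCoeff]

theorem X_mul_one_add_expSubExpTail (u : A) :
    X * (1 + expSubExpTail u) = rescale (1 - u) (exp A) - rescale (-u) (exp A) := by
  have h : X * (u • rescale (-u) (expTail A)) = -rescale (-u) (X * expTail A) := by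
    rw [← X_mul_smul_rescale, neg_smul, mul_neg, neg_neg]
  rw [expSubExpTail, mul_add, mul_add, mul_one, X_mul_smul_rescale, h, X_mul_expTail]
  simp only [map_sub, map_one, rescale_X, map_neg]
  ring

theorem aeval_bernoulli_eq_factorial_mul_coeff (u : A) (n : ℕ) :
    Polynomial.aeval u (Polynomial.bernoulli n) =
      n ! * coeff n (mk fun n => Polynomial.aeval u ((1 / n ! : ℚ) • Polynomial.bernoulli n)) := by
  rw [coeff_mk, map_smul, Algebra.smul_def, ← mul_assoc, ← map_natCast (algebraMap ℚ A),
    ← map_mul, mul_one_div_cancel (by positivity), map_one, one_mul]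

theorem bernoulli_generating_function_mul_one_add_expSubExpTail (u : A) :
    (mk fun n => Polynomial.aeval u ((1 / n ! : ℚ) • Polynomial.bernoulli n)) *
      (1 + expSubExpTail u) = 1 := by
  refine X_mul_cancel ?_
  have hden : rescale (1 - u) (exp A) - rescale (-u) (exp A) =
      (exp A - 1) * rescale (-u) (exp A) := by
    rw [sub_mul, one_mul, sub_eq_add_neg (1 : A), ← exp_mul_exp_eq_exp_add, rescale_one,
      RingHom.id_apply]
  rw [mul_left_comm, X_mul_one_add_expSubExpTail, hden, ← mul_assoc,
    Polynomial.bernoulli_generating_function, mul_assoc, exp_mul_exp_eq_exp_add, add_neg_cancel,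
    rescale_zero]
  simp [constantCoeff_exp]

end PowerSeries

theorem bernoulliPolynomial_eq_sum_stirling (n : ℕ) (hn : 0 < n) (u : ℝ) :
    Polynomial.eval u ((Polynomial.bernoulli n).map (algebraMap ℚ ℝ)) =
      ∑ k ∈ Finset.Icc 1 n, (k ! : ℝ) *
        ∑ rs ∈ Finset.HasAntidiagonal.antidiagonal k, ∑ lm ∈ Finset.HasAntidiagonal.antidiagonal n,
          (-1 : ℝ) ^ lm.2 * (n.choose lm.1 : ℝ) *
            ((lm.1 ! : ℝ) / ((lm.1 + rs.1)! : ℝ)) * ((lm.2 ! : ℝ) / ((lm.2 + rs.2)! : ℝ)) *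
            (∑ i ∈ Finset.range (rs.1 + 1), ∑ j ∈ Finset.range (rs.2 + 1),
              (-1 : ℝ) ^ (i + j) * ((lm.1 + rs.1).choose (rs.1 - i) : ℝ) *
                ((lm.2 + rs.2).choose (rs.2 - j) : ℝ) *
                (stirling2 (lm.1 + i) i : ℝ) * (stirling2 (lm.2 + j) j : ℝ)) *
            u ^ (lm.2 + rs.2) * (1 - u) ^ (lm.1 + rs.1) := by
  have hbracket (l r m s : ℕ) :
      ∑ i ∈ range (r + 1), ∑ j ∈ range (s + 1),
        (-1 : ℝ) ^ (i + j) * ((l + r).choose (r - i) : ℝ) * ((m + s).choose (s - j) : ℝ) *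
          (stirling2 (l + i) i : ℝ) * (stirling2 (m + j) j : ℝ) =
      (∑ i ∈ range (r + 1), (-1) ^ i * ((l + r).choose (r - i) : ℝ) * stirling2 (l + i) i) *
        ∑ j ∈ range (s + 1), (-1) ^ j * ((m + s).choose (s - j) : ℝ) * stirling2 (m + j) j := by
    rw [sum_mul_sum]
    exact sum_congr rfl fun i _ => sum_congr rfl fun j _ => by ring
  rw [Polynomial.eval_map_algebraMap, aeval_bernoulli_eq_factorial_mul_coeff,
    coeff_eq_sum_neg_one_pow_mul_coeff_pow (constantCoeff_expSubExpTail u)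
    (bernoulli_generating_function_mul_one_add_expSubExpTail u), ← Nat.Ico_zero_eq_range,
    Ico_add_one_right_eq_Icc, ← insert_Icc_add_one_left_eq_Icc n.zero_le, sum_insert (by simp),
    zero_add, pow_zero, pow_zero, one_mul, coeff_one, if_neg hn.ne', zero_add, mul_sum]
  refine sum_congr rfl fun k _ => ?_
  rw [expSubExpTail, coeff_add_pow]
  simp only [hbracket, mul_sum (s := HasAntidiagonal.antidiagonal _)]
  refine sum_congr rfl fun ⟨r, s⟩ hrs => sum_congr rfl fun ⟨l, m⟩ hlm => ?_
  rw [HasAntidiagonal.mem_antidiagonal] at hrs hlm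
  subst hrs hlm
  rw [coeff_smul_rescale_pow, coeff_smul_rescale_pow, coeff_expTail_pow_eq_sum_stirling2,
    coeff_expTail_pow_eq_sum_stirling2, Nat.cast_add_choose, Nat.cast_add_choose]
  field_simp
  ring_nf
  simp only [pow_mul', neg_one_sq, one_pow, mul_one]
end

section
/- Let u, v be k-times differentiable functions on an interval with v nonvanishing. Then the k-th derivative of u/v equals ((-1)^k / v^{k+1}) times the determinant of the (k+1)×(k+1) matrix whose first column is (u, u', ..., u^{(k)})^T and whose (\ell, m) entry for columns m = 0,...,k-1 (placed in columns 2 through k+1) and rows \ell = 0,...,k is binom(\ell, m) v^{(\ell-m)}, with the convention that binom(\ell,m) v^{(\ell-m)} = 0 when \ell < m. -/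
/-!
Write `w = u / v`. By the Leibniz rule applied to `u = w * v`, the vector `(u^{(ℓ)})_{ℓ ≤ k}` is
`L *ᵥ (w^{(m)})_{m ≤ k}`, where `L` is the lower triangular matrix with entries
`choose ℓ m * v^{(ℓ - m)}` and diagonal `v`. The matrix of the theorem is `L` with its columns
shifted one step to the right and `L *ᵥ (w^{(m)})` as first column. Expanding that column by
multilinearity, only the term `w^{(k)}` times the missing column of `L` survives, so the
determinant is `w^{(k)}` times `det L = v^{k+1}` up to the sign `(-1)^k` of the cyclic shift,
which is Cramer's rule for the last unknown.
-/

open Finset Matrix Topology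

variable {R : Type*} [CommRing R]

def leibnizMatrix (n : ℕ) (g : ℕ → R) : Matrix (Fin (n + 1)) (Fin (n + 1)) R :=
  of fun ℓ m => if (m : ℕ) ≤ ℓ then ((ℓ : ℕ).choose m : R) * g (ℓ - m) else 0

theorem det_leibnizMatrix (n : ℕ) (g : ℕ → R) : (leibnizMatrix n g).det = g 0 ^ (n + 1) := by
  rw [det_of_isLowerTriangular]
  · simp [leibnizMatrix]
  · intro i j hij
    simp [leibnizMatrix, not_le.mpr (OrderDual.toDual_lt_toDual.mp hij)]

theorem leibnizMatrix_mulVec_apply (n : ℕ) (g f : ℕ → R) (ℓ : Fin (n + 1)) :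
    (leibnizMatrix n g *ᵥ fun m => f m) ℓ =
      ∑ i ∈ range (ℓ + 1), ((ℓ : ℕ).choose i : R) * f i * g (ℓ - i) := by
  simp only [mulVec, dotProduct, leibnizMatrix, of_apply]
  rw [Fin.sum_univ_eq_sum_range
      (fun i => (if i ≤ (ℓ : ℕ) then ((ℓ : ℕ).choose i : R) * g (ℓ - i) else 0) * f i),
    ← sum_subset (range_subset_range.mpr ℓ.isLt)]
  · refine sum_congr rfl fun i hi => ?_
    rw [if_pos (Nat.lt_succ_iff.mp (mem_range.mp hi))]
    ring
  · intro i _ hi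
    rw [if_neg (by simpa using hi), zero_mul]

theorem det_updateCol_zero_mulVec_submatrix_finRotate {n : ℕ}
    (A : Matrix (Fin (n + 1)) (Fin (n + 1)) R) (c : Fin (n + 1) → R) :
    ((A.submatrix id (finRotate (n + 1)).symm).updateCol 0 (A *ᵥ c)).det =
      (-1) ^ n * c (Fin.last n) * A.det := by
  set σ := (finRotate (n + 1)).symm
  have hc : A *ᵥ c = fun ℓ => ∑ j, c (σ j) • A.submatrix id σ ℓ j := by
    ext ℓ
    simp only [mulVec, dotProduct, submatrix_apply, id_eq, smul_eq_mul]
    rw [← Equiv.sum_comp σ]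
    exact sum_congr rfl fun _ _ => mul_comm _ _
  have hσ0 : σ 0 = Fin.last n := (finRotate (n + 1)).symm_apply_eq.mpr finRotate_last.symm
  rw [hc, det_updateCol_sum, det_permute', Equiv.Perm.sign_symm, sign_finRotate, hσ0]
  push_cast [Nat.add_sub_cancel, smul_eq_mul]
  ring

section

variable {𝕜 : Type*} [NontriviallyNormedField 𝕜] {u v : 𝕜 → 𝕜} {z : 𝕜}

theorem iteratedDeriv_eq_sum_iteratedDeriv_div_mul {n : ℕ} (hu : ContDiffAt 𝕜 n u z)
    (hv : ContDiffAt 𝕜 n v z) (hvz : v z ≠ 0) :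
    iteratedDeriv n u z = ∑ i ∈ range (n + 1),
      (n.choose i : 𝕜) * iteratedDeriv i (fun x => u x / v x) z * iteratedDeriv (n - i) v z := by
  have hu_eq : u =ᶠ[𝓝 z] fun x => u x / v x * v x := by
    filter_upwards [hv.continuousAt.eventually_ne hvz] with x hx using (div_mul_cancel₀ _ hx).symm
  rw [hu_eq.iteratedDeriv_eq]
  exact iteratedDeriv_fun_mul (f := fun x => u x / v x) (hu.div hv hvz) hv

theorem iteratedDeriv_eq_leibnizMatrix_mulVec {n : ℕ} (hu : ContDiffAt 𝕜 n u z)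
    (hv : ContDiffAt 𝕜 n v z) (hvz : v z ≠ 0) :
    (fun ℓ : Fin (n + 1) => iteratedDeriv ℓ u z) =
      leibnizMatrix n (fun j => iteratedDeriv j v z) *ᵥ
        fun m => iteratedDeriv m (fun x => u x / v x) z := by
  ext ℓ
  have hℓ : ((ℓ : ℕ) : WithTop ℕ∞) ≤ n := by exact_mod_cast Nat.lt_succ_iff.mp ℓ.isLt
  rw [iteratedDeriv_eq_sum_iteratedDeriv_div_mul (hu.of_le hℓ) (hv.of_le hℓ) hvz]
  exact (leibnizMatrix_mulVec_apply n (fun j => iteratedDeriv j v z)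
    (fun i => iteratedDeriv i (fun x => u x / v x) z) ℓ).symm

end

theorem iteratedDeriv_div_eq_det (k : ℕ) (a b : ℝ) (u v : ℝ → ℝ)
    (hu : ContDiffOn ℝ k u (Set.Ioo a b)) (hv : ContDiffOn ℝ k v (Set.Ioo a b))
    (hv0 : ∀ x ∈ Set.Ioo a b, v x ≠ 0) (z : ℝ) (hz : z ∈ Set.Ioo a b) :
    iteratedDeriv k (fun x => u x / v x) z =
      ((-1 : ℝ) ^ k / (v z) ^ (k + 1)) *
        Matrix.det (Matrix.of fun ℓ m : Fin (k + 1) =>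
          if (m : ℕ) = 0 then iteratedDeriv (ℓ : ℕ) u z
          else if (m : ℕ) - 1 ≤ (ℓ : ℕ) then
            ((ℓ : ℕ).choose ((m : ℕ) - 1) : ℝ) * iteratedDeriv ((ℓ : ℕ) - ((m : ℕ) - 1)) v z
          else 0) := by
  have hzs : Set.Ioo a b ∈ 𝓝 z := isOpen_Ioo.mem_nhds hz
  set L := leibnizMatrix k fun j => iteratedDeriv j v z
  set c : Fin (k + 1) → ℝ := fun m => iteratedDeriv m (fun x => u x / v x) z
  have hM : (Matrix.of fun ℓ m : Fin (k + 1) =>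
        if (m : ℕ) = 0 then iteratedDeriv (ℓ : ℕ) u z
        else if (m : ℕ) - 1 ≤ (ℓ : ℕ) then
          ((ℓ : ℕ).choose ((m : ℕ) - 1) : ℝ) * iteratedDeriv ((ℓ : ℕ) - ((m : ℕ) - 1)) v z
        else 0) = (L.submatrix id (finRotate (k + 1)).symm).updateCol 0 (L *ᵥ c) := by
    rw [← iteratedDeriv_eq_leibnizMatrix_mulVec (hu.contDiffAt hzs) (hv.contDiffAt hzs) (hv0 z hz)]
    ext ℓ m
    rcases eq_or_ne m 0 with rfl | hm
    · simp
    · simp only [of_apply, updateCol_ne hm, submatrix_apply, id_eq, L, leibnizMatrix,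
        coe_finRotate_symm_of_ne_zero hm, Fin.val_ne_zero_iff.mpr hm, if_false]
  have hvz : v z ^ (k + 1) ≠ 0 := pow_ne_zero _ (hv0 z hz)
  rw [hM, det_updateCol_zero_mulVec_submatrix_finRotate, det_leibnizMatrix, iteratedDeriv_zero]
  field_simp
  rw [← pow_mul, mul_comm k 2, pow_mul, neg_one_sq, one_pow, one_mul]
  rfl
end

section
/- For every positive integer n, (-1)^n n! times the determinant of the n×n matrix with entry [(1-u)^{\ell-m+1} - (-u)^{\ell-m+1}] / (\ell-m+1)! in row \ell (1 \le \ell \le n) and column m (0 \le m \le n-1) (where terms with \ell - m + 1 < 0 are zero) equals the Bernoulli polynomial B_n(u). -/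
/-!
Write `c k = ((1 - u) ^ k - (-u) ^ k) / k!`. The matrix is the lower Hessenberg Toeplitz matrix
`(a (i + 1 - j))` of `a k = c (k + 1)`, the coefficients of `A(z) = (e^{(1-u)z} - e^{-uz}) / z`.
Since `e^{(1-u)z} - e^{-uz} = e^{-uz} (e^z - 1)`, the generating function of the Bernoulli
polynomials says `1 / A(z) = ∑ B_n(u) z^n / n!`.

Whenever `a 0 = 1` and `1 / A = ∑ b_n z^n`, the convolution identities say that the Hessenberg
Toeplitz matrix of size `n` sends `(b_0, …, b_{n-1})` to `-b_n` times the last basis vector;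
Cramer's rule in the first coordinate, where the relevant minor is unitriangular, gives
`det = (-1)^n b_n`.
-/

open Nat Matrix PowerSeries

section HessenbergToeplitz

variable {R : Type*} [CommRing R]

def hessenbergToeplitz (a : ℕ → R) (n : ℕ) : Matrix (Fin n) (Fin n) R :=
  Matrix.of fun i j => if (j : ℕ) ≤ i + 1 then a (i + 1 - j) else 0

variable {a b : ℕ → R}

lemma sum_range_mul_eq_zero_of_mk_mul_mk_eq_one (h : mk a * mk b = 1) {N : ℕ} (hN : N ≠ 0) :
    ∑ j ∈ Finset.range (N + 1), a (N - j) * b j = 0 := by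
  have hcoeff := congrArg (coeff N) (mul_comm (mk a) (mk b) ▸ h)
  rw [coeff_mul,
    Finset.Nat.sum_antidiagonal_eq_sum_range_succ fun i j => coeff i (mk b) * coeff j (mk a)]
    at hcoeff
  simpa [coeff_one, hN, mul_comm] using hcoeff

lemma hessenbergToeplitz_mulVec (h : mk a * mk b = 1) (ha : a 0 = 1) (m : ℕ) :
    hessenbergToeplitz a (m + 1) *ᵥ (fun j => b j) = Pi.single (Fin.last m) (-b (m + 1)) := by
  ext i
  have hrow : (hessenbergToeplitz a (m + 1) *ᵥ fun j => b j) i =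
      ∑ j ∈ Finset.range (min (i + 2) (m + 1)), a (i + 1 - j) * b j := by
    have hfilter :
        {j ∈ Finset.range (m + 1) | j ≤ (i : ℕ) + 1} = Finset.range (min (i + 2) (m + 1)) := by
      ext j
      simp only [Finset.mem_filter, Finset.mem_range]
      omega
    simp only [mulVec, dotProduct, hessenbergToeplitz, of_apply, ite_mul, zero_mul]
    rw [Fin.sum_univ_eq_sum_range
        (fun j => if j ≤ (i : ℕ) + 1 then a (i + 1 - j) * b j else 0),
      ← Finset.sum_filter, hfilter]
  rw [hrow]
  by_cases hi : (i : ℕ) = m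
  · have hconv := sum_range_mul_eq_zero_of_mk_mul_mk_eq_one h (N := m + 1) (by omega)
    rw [Finset.sum_range_succ, Nat.sub_self, ha, one_mul] at hconv
    rw [show i = Fin.last m from Fin.ext hi, Pi.single_eq_same, Fin.val_last,
      min_eq_right (by omega)]
    linear_combination hconv
  · rw [Pi.single_eq_of_ne fun hlast => hi (by simp [hlast]), min_eq_left (by omega)]
    exact sum_range_mul_eq_zero_of_mk_mul_mk_eq_one h (by omega)

lemma det_submatrix_castSucc_succ_hessenbergToeplitz (ha : a 0 = 1) (m : ℕ) :
    ((hessenbergToeplitz a (m + 1)).submatrix Fin.castSucc Fin.succ).det = 1 := by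
  have hlower :
      ((hessenbergToeplitz a (m + 1)).submatrix Fin.castSucc Fin.succ).IsLowerTriangular := by
    intro r s (hrs : (r : ℕ) < s)
    simp only [hessenbergToeplitz, submatrix_apply, of_apply, Fin.val_castSucc, Fin.val_succ]
    rw [if_neg (by omega)]
  rw [det_of_isLowerTriangular _ hlower]
  simp [hessenbergToeplitz, ha]

theorem det_hessenbergToeplitz (h : mk a * mk b = 1) (ha : a 0 = 1) (n : ℕ) :
    (hessenbergToeplitz a n).det = (-1) ^ n * b n := by
  have hb : b 0 = 1 := by simpa [ha] using congrArg (coeff 0) h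
  cases n with
  | zero => simp [hb]
  | succ m =>
    set H := hessenbergToeplitz a (m + 1)
    calc H.det = (H.det • fun j : Fin (m + 1) => b j) 0 := by simp [hb]
      _ = (H.adjugate *ᵥ (H *ᵥ fun j => b j)) 0 := by
        rw [mulVec_mulVec, adjugate_mul, smul_mulVec, one_mulVec]
      _ = H.adjugate 0 (Fin.last m) * -b (m + 1) := by
        simp [H, hessenbergToeplitz_mulVec h ha]
      _ = (-1) ^ (m + 1) * b (m + 1) := by
        rw [adjugate_fin_succ_eq_det_submatrix, Fin.succAbove_last, Fin.succAbove_zero,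
          det_submatrix_castSucc_succ_hessenbergToeplitz ha, Fin.val_last, Fin.val_zero]
        ring

lemma hessenbergToeplitz_succ_eq_of {c : ℕ → R} (hc : c 0 = 0) (n : ℕ) :
    hessenbergToeplitz (fun k => c (k + 1)) n =
      of fun i j : Fin n => if (j : ℕ) ≤ i + 2 then c (i + 2 - j) else 0 := by
  ext i j
  simp only [hessenbergToeplitz, of_apply]
  split_ifs
  · rw [show (i : ℕ) + 2 - j = i + 1 - j + 1 by omega]
  · omega
  · rw [show (i : ℕ) + 2 - j = 0 by omega, hc]
  · rfl

end HessenbergToeplitz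

theorem rescale_exp_sub_rescale_exp_mul_bernoulli {A : Type*} [CommRing A] [Algebra ℚ A] (u : A) :
    (rescale (1 - u) (exp A) - rescale (-u) (exp A)) *
      mk (fun n => Polynomial.aeval u ((1 / n ! : ℚ) • Polynomial.bernoulli n)) = X := by
  have hshift : rescale (1 - u) (exp A) = rescale (-u) (exp A) * exp A := by
    simpa [rescale_one, neg_add_eq_sub] using (exp_mul_exp_eq_exp_add (-u) (1 : A)).symm
  have hcancel : rescale (-u) (exp A) * rescale u (exp A) = 1 := by
    rw [exp_mul_exp_eq_exp_add, neg_add_cancel, rescale_zero]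
    simp
  calc (rescale (1 - u) (exp A) - rescale (-u) (exp A)) *
        mk (fun n => Polynomial.aeval u ((1 / n ! : ℚ) • Polynomial.bernoulli n))
      = rescale (-u) (exp A) *
          (mk (fun n => Polynomial.aeval u ((1 / n ! : ℚ) • Polynomial.bernoulli n)) *
            (exp A - 1)) := by rw [hshift]; ring
    _ = X * (rescale (-u) (exp A) * rescale u (exp A)) := by
      rw [Polynomial.bernoulli_generating_function]; ring
    _ = X := by rw [hcancel, mul_one]

lemma mk_mul_mk_bernoulli_div_factorial_eq_one {K : Type*} [Field K] [CharZero K] (u : K) :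
    mk (fun k => ((1 - u) ^ (k + 1) - (-u) ^ (k + 1)) / ((k + 1)! : K)) *
      mk (fun n => ((Polynomial.bernoulli n).map (algebraMap ℚ K)).eval u / (n ! : K)) = 1 := by
  refine X_mul_cancel ?_
  have hexp : X * mk (fun k => ((1 - u) ^ (k + 1) - (-u) ^ (k + 1)) / ((k + 1)! : K)) =
      rescale (1 - u) (exp K) - rescale (-u) (exp K) := by
    ext k
    cases k with
    | zero =>
      rw [coeff_zero_X_mul, map_sub, coeff_rescale, coeff_rescale]
      simp
    | succ k => simp [coeff_succ_X_mul, div_eq_mul_inv, sub_mul]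
  have hbernoulli :
      mk (fun n => ((Polynomial.bernoulli n).map (algebraMap ℚ K)).eval u / (n ! : K)) =
        mk (fun n => Polynomial.aeval u ((1 / n ! : ℚ) • Polynomial.bernoulli n)) := by
    ext n
    simp [Polynomial.eval_map_algebraMap, div_eq_inv_mul, Rat.smul_def]
  rw [← mul_assoc, hexp, hbernoulli, rescale_exp_sub_rescale_exp_mul_bernoulli, mul_one]

theorem det_eq_bernoulliPolynomial_general (n : ℕ) (u : ℝ) :
    (-1 : ℝ) ^ n * (n ! : ℝ) *
        Matrix.det (Matrix.of fun i j : Fin n =>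
          if (j : ℕ) ≤ (i : ℕ) + 2 then
            ((1 - u) ^ ((i : ℕ) + 2 - (j : ℕ)) - (-u) ^ ((i : ℕ) + 2 - (j : ℕ))) /
              (((i : ℕ) + 2 - (j : ℕ))! : ℝ)
          else 0) =
      Polynomial.eval u ((Polynomial.bernoulli n).map (algebraMap ℚ ℝ)) := by
  rw [← hessenbergToeplitz_succ_eq_of (c := fun k => ((1 - u) ^ k - (-u) ^ k) / (k ! : ℝ))
      (by simp),
    det_hessenbergToeplitz (mk_mul_mk_bernoulli_div_factorial_eq_one u) (by simp),
    mul_mul_mul_comm, ← mul_pow, neg_one_mul, neg_neg, one_pow, one_mul,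
    mul_div_cancel₀ _ (by positivity)]

theorem det_eq_bernoulliPolynomial (n : ℕ) (hn : 0 < n) (u : ℝ) :
    (-1 : ℝ) ^ n * (n ! : ℝ) *
        Matrix.det (Matrix.of fun i j : Fin n =>
          if (j : ℕ) ≤ (i : ℕ) + 2 then
            ((1 - u) ^ ((i : ℕ) + 2 - (j : ℕ)) - (-u) ^ ((i : ℕ) + 2 - (j : ℕ))) /
              (((i : ℕ) + 2 - (j : ℕ))! : ℝ)
          else 0) =
      Polynomial.eval u ((Polynomial.bernoulli n).map (algebraMap ℚ ℝ)) :=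
  det_eq_bernoulliPolynomial_general n u
end
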